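/- Let τ ∈ ℂ with Im τ > 0. Then the Jacobi theta functions satisfy the Jacobi identity θ₂(τ)⁴ + θ₄(τ)⁴ = θ₃(τ)⁴. -/

import Mathlib

/-!
Splitting the double series of a product of two theta series according to the parity of `m + n`
and using `(x + y)² + (x - y)² = 2x² + 2y²` gives the duplication formulas
`θ₃(τ)² = θ₃(2τ)² + θ₂(2τ)²` and `θ₂(τ)² = 2 θ₂(2τ) θ₃(2τ)`; since `θ₄(τ) = θ₃(τ + 1)` and
`θ₂(τ + 2) = i θ₂(τ)`, also `θ₄(τ)² = θ₃(2τ)² - θ₂(2τ)²`. Jacobi's identity is then the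
Pythagorean identity `(2xy)² + (x² - y²)² = (x² + y²)²`.
-/

open Complex Real

/-- The Jacobi theta constant `θ₂(τ) = ∑_{n∈ℤ} exp(iπτ(n+1/2)²)`. -/
noncomputable def theta2 (τ : ℂ) : ℂ :=
  ∑' n : ℤ, Complex.exp (Real.pi * Complex.I * τ * ((n : ℂ) + 1 / 2) ^ 2)

/-- The Jacobi theta constant `θ₃(τ) = ∑_{n∈ℤ} exp(iπτ n²)`. -/
noncomputable def theta3 (τ : ℂ) : ℂ :=
  ∑' n : ℤ, Complex.exp (Real.pi * Complex.I * τ * (n : ℂ) ^ 2)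

/-- The Jacobi theta constant `θ₄(τ) = ∑_{n∈ℤ} (−1)ⁿ exp(iπτ n²)`. -/
noncomputable def theta4 (τ : ℂ) : ℂ :=
  ∑' n : ℤ, (-1 : ℂ) ^ n * Complex.exp (Real.pi * Complex.I * τ * (n : ℂ) ^ 2)

def Int.prodParityEquiv : (ℤ × ℤ) ⊕ (ℤ × ℤ) ≃ ℤ × ℤ where
  toFun
    | .inl (p, q) => (p + q, p - q)
    | .inr (p, q) => (p + q + 1, p - q)
  invFun x :=
    if (x.1 + x.2) % 2 = 0 then .inl ((x.1 + x.2) / 2, (x.1 - x.2) / 2)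
    else .inr ((x.1 + x.2 - 1) / 2, (x.1 - x.2 - 1) / 2)
  left_inv := by
    rintro (⟨p, q⟩ | ⟨p, q⟩)
    · dsimp only
      rw [if_pos (by omega)]
      congr 2 <;> omega
    · dsimp only
      rw [if_neg (by omega)]
      congr 2 <;> omega
  right_inv := by
    rintro ⟨m, n⟩
    by_cases h : (m + n) % 2 = 0
    · simp only [if_pos h, Prod.mk.injEq]
      omega
    · simp only [if_neg h, Prod.mk.injEq]
      omega

theorem Int.tsum_prod_split_parity {G : Type*} [AddCommGroup G] [UniformSpace G]
    [IsUniformAddGroup G] [CompleteSpace G] [T2Space G] {f : ℤ × ℤ → G} (hf : Summable f) :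
    ∑' x, f x =
      ∑' p : ℤ × ℤ, f (p.1 + p.2, p.1 - p.2) + ∑' p : ℤ × ℤ, f (p.1 + p.2 + 1, p.1 - p.2) := by
  have hf' : Summable (f ∘ Int.prodParityEquiv) := Int.prodParityEquiv.summable_iff.mpr hf
  rw [← Int.prodParityEquiv.tsum_eq]
  exact Summable.tsum_sum (f := f ∘ Int.prodParityEquiv) (hf'.comp_injective Sum.inl_injective)
    (hf'.comp_injective Sum.inr_injective)

noncomputable def shiftedThetaTerm (a τ : ℂ) (n : ℤ) : ℂ :=
  cexp (π * I * τ * ((n : ℂ) + a) ^ 2)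

noncomputable def shiftedTheta (a τ : ℂ) : ℂ :=
  ∑' n : ℤ, shiftedThetaTerm a τ n

theorem summable_norm_shiftedThetaTerm (a : ℂ) {τ : ℂ} (hτ : 0 < τ.im) :
    Summable fun n => ‖shiftedThetaTerm a τ n‖ := by
  refine summable_norm_iff.mpr ?_
  refine (((summable_jacobiTheta₂_term_iff (a * τ) τ).mpr hτ).mul_left
    (cexp (π * I * τ * a ^ 2))).congr fun n => ?_
  rw [jacobiTheta₂_term, shiftedThetaTerm, ← Complex.exp_add]
  ring_nf

theorem shiftedThetaTerm_add_one (a τ : ℂ) (n : ℤ) :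
    shiftedThetaTerm a τ (n + 1) = shiftedThetaTerm (a + 1) τ n := by
  simp only [shiftedThetaTerm]
  push_cast
  ring_nf

theorem shiftedTheta_add_one (a τ : ℂ) : shiftedTheta (a + 1) τ = shiftedTheta a τ := by
  rw [shiftedTheta, shiftedTheta, ← (Equiv.addRight (1 : ℤ)).tsum_eq (shiftedThetaTerm a τ)]
  exact tsum_congr fun n => (shiftedThetaTerm_add_one a τ n).symm

theorem shiftedThetaTerm_add_mul_shiftedThetaTerm_sub (a b τ : ℂ) (x y : ℤ) :
    shiftedThetaTerm a τ (x + y) * shiftedThetaTerm b τ (x - y) =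
      shiftedThetaTerm ((a + b) / 2) (2 * τ) x * shiftedThetaTerm ((a - b) / 2) (2 * τ) y := by
  simp only [shiftedThetaTerm, ← Complex.exp_add]
  push_cast
  ring_nf

theorem shiftedTheta_mul_shiftedTheta (a b : ℂ) {τ : ℂ} (hτ : 0 < τ.im) :
    shiftedTheta a τ * shiftedTheta b τ =
      shiftedTheta ((a + b) / 2) (2 * τ) * shiftedTheta ((a - b) / 2) (2 * τ) +
        shiftedTheta ((a + 1 + b) / 2) (2 * τ) * shiftedTheta ((a + 1 - b) / 2) (2 * τ) := by
  have h2τ : 0 < (2 * τ).im := by simpa using hτ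
  have ha := summable_norm_shiftedThetaTerm a hτ
  have hb := summable_norm_shiftedThetaTerm b hτ
  have hab := summable_mul_of_summable_norm ha hb
  simp only [shiftedTheta]
  rw [tsum_mul_tsum_of_summable_norm ha hb, Int.tsum_prod_split_parity hab,
    tsum_mul_tsum_of_summable_norm (summable_norm_shiftedThetaTerm ((a + b) / 2) h2τ)
      (summable_norm_shiftedThetaTerm ((a - b) / 2) h2τ),
    tsum_mul_tsum_of_summable_norm (summable_norm_shiftedThetaTerm ((a + 1 + b) / 2) h2τ)
      (summable_norm_shiftedThetaTerm ((a + 1 - b) / 2) h2τ)]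
  refine congrArg₂ (· + ·) (tsum_congr fun p => ?_) (tsum_congr fun p => ?_)
  · exact shiftedThetaTerm_add_mul_shiftedThetaTerm_sub a b τ p.1 p.2
  · rw [shiftedThetaTerm_add_one]
    exact shiftedThetaTerm_add_mul_shiftedThetaTerm_sub (a + 1) b τ p.1 p.2

theorem theta3_eq_shiftedTheta (τ : ℂ) : theta3 τ = shiftedTheta 0 τ := by
  simp [theta3, shiftedTheta, shiftedThetaTerm]

theorem theta2_eq_shiftedTheta (τ : ℂ) : theta2 τ = shiftedTheta (1 / 2) τ := rfl

theorem theta3_sq {τ : ℂ} (hτ : 0 < τ.im) :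
    theta3 τ ^ 2 = theta3 (2 * τ) ^ 2 + theta2 (2 * τ) ^ 2 := by
  rw [theta3_eq_shiftedTheta, theta3_eq_shiftedTheta, theta2_eq_shiftedTheta, sq,
    shiftedTheta_mul_shiftedTheta 0 0 hτ]
  norm_num [sq]

theorem theta2_sq {τ : ℂ} (hτ : 0 < τ.im) :
    theta2 τ ^ 2 = 2 * theta2 (2 * τ) * theta3 (2 * τ) := by
  have h1 : shiftedTheta 1 (2 * τ) = shiftedTheta 0 (2 * τ) := by
    simpa using shiftedTheta_add_one 0 (2 * τ)
  rw [theta3_eq_shiftedTheta, theta2_eq_shiftedTheta, theta2_eq_shiftedTheta, sq,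
    shiftedTheta_mul_shiftedTheta _ _ hτ]
  norm_num [h1]
  ring

theorem theta3_add_two (τ : ℂ) : theta3 (τ + 2) = theta3 τ := by
  refine tsum_congr fun n => ?_
  have : π * I * (τ + 2) * (n : ℂ) ^ 2 =
      π * I * τ * (n : ℂ) ^ 2 + ((n ^ 2 : ℤ) : ℂ) * (2 * π * I) := by
    push_cast; ring
  rw [this, Complex.exp_add, Complex.exp_int_mul_two_pi_mul_I, mul_one]

theorem theta2_add_two (τ : ℂ) : theta2 (τ + 2) = I * theta2 τ := by
  rw [theta2, theta2, ← tsum_mul_left]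
  refine tsum_congr fun n => ?_
  have : π * I * (τ + 2) * ((n : ℂ) + 1 / 2) ^ 2 =
      π * I * τ * ((n : ℂ) + 1 / 2) ^ 2 + ((n ^ 2 + n : ℤ) : ℂ) * (2 * π * I) + π / 2 * I := by
    push_cast; ring
  rw [this, Complex.exp_add, Complex.exp_add, Complex.exp_int_mul_two_pi_mul_I,
    Complex.exp_pi_div_two_mul_I]
  ring

theorem theta4_eq_theta3_add_one (τ : ℂ) : theta4 τ = theta3 (τ + 1) := by
  refine tsum_congr fun n => ?_
  obtain ⟨k, hk⟩ := Int.even_mul_pred_self n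
  have : π * I * τ * (n : ℂ) ^ 2 + ((k : ℤ) : ℂ) * (2 * π * I) + n * (π * I) =
      π * I * (τ + 1) * (n : ℂ) ^ 2 := by
    have hk' : ((n * (n - 1) : ℤ) : ℂ) = k + k := by exact_mod_cast hk
    push_cast at hk'
    linear_combination -π * I * hk'
  rw [← this, Complex.exp_add, Complex.exp_add, Complex.exp_int_mul_two_pi_mul_I,
    Complex.exp_int_mul, Complex.exp_pi_mul_I]
  ring

theorem theta4_sq {τ : ℂ} (hτ : 0 < τ.im) :
    theta4 τ ^ 2 = theta3 (2 * τ) ^ 2 - theta2 (2 * τ) ^ 2 := by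
  have hτ1 : 0 < (τ + 1).im := by simpa using hτ
  rw [theta4_eq_theta3_add_one, theta3_sq hτ1, mul_add, mul_one,
    theta3_add_two, theta2_add_two, mul_pow, I_sq]
  ring

/-- The Jacobi identity `θ₂(τ)⁴ + θ₄(τ)⁴ = θ₃(τ)⁴` for `τ` in the upper half-plane. -/
theorem jacobi_theta_identity (τ : ℂ) (hτ : 0 < τ.im) :
    theta2 τ ^ 4 + theta4 τ ^ 4 = theta3 τ ^ 4 := by
  calc theta2 τ ^ 4 + theta4 τ ^ 4 = (theta2 τ ^ 2) ^ 2 + (theta4 τ ^ 2) ^ 2 := by ring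
    _ = (theta3 τ ^ 2) ^ 2 := by
      rw [theta2_sq hτ, theta4_sq hτ, theta3_sq hτ]
      ring
    _ = theta3 τ ^ 4 := by ring
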